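/- For any N×n real matrices A (of rank r ≥ 1) and E and any 1 ≤ k ≤ r, if the k-th largest singular value σ̃_k of A + E is positive, then σ̃_k ≤ σ_k + 2√k·‖E‖²/σ̃_k + k·‖E‖³/σ̃_k² + ‖Uᵀ·E·V‖. -/

import Mathlib

open MeasureTheory ProbabilityTheory Matrix

noncomputable section

/-- ℓ²→ℓ² operator (spectral) norm of a real matrix. -/
def opNorm {m n : Type*} [Fintype m] [Fintype n] [DecidableEq n]
    (M : Matrix m n ℝ) : ℝ :=
  ‖LinearMap.toContinuousLinearMap (Matrix.toEuclideanLin M)‖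

/-- ℓ²→ℓ² operator (spectral) norm of a complex matrix. -/
def opNormC {m n : Type*} [Fintype m] [Fintype n] [DecidableEq n]
    (M : Matrix m n ℂ) : ℝ :=
  ‖LinearMap.toContinuousLinearMap (Matrix.toEuclideanLin M)‖

/-- Euclidean norm of a finitely indexed real vector. -/
def vnorm {n : Type*} [Fintype n] (x : n → ℝ) : ℝ :=
  Real.sqrt (∑ i, (x i) ^ 2)

/-- `‖M‖_{2,∞}`: the maximum Euclidean norm of the rows of `M`. -/
def twoInf {m n : Type*} [Fintype m] [Fintype n] (M : Matrix m n ℝ) : ℝ :=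
  ⨆ i, vnorm (M i)

/-- The diagonal matrix `diag (σ 1, …, σ m)` built from a 1-indexed sequence `σ`. -/
def sdiag {m : ℕ} (σ : ℕ → ℝ) : Matrix (Fin m) (Fin m) ℝ :=
  Matrix.of fun i j => if i = j then σ ((i : ℕ) + 1) else 0

/-- Orthogonal projection `W_{k,s} W_{k,s}ᵀ` onto the span of the (1-indexed)
columns `k,…,s` of `W`. -/
def projSlice {N m : ℕ} (W : Matrix (Fin N) (Fin m) ℝ) (k s : ℕ) :
    Matrix (Fin N) (Fin N) ℝ :=
  Matrix.of fun a b =>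
    ∑ j : Fin m, if k ≤ (j : ℕ) + 1 ∧ (j : ℕ) + 1 ≤ s then W a j * W b j else 0

/-- `‖·‖_{2,∞}` of the submatrix of `M` given by the (1-indexed) columns `k,…,s`. -/
def sliceTwoInf {N m : ℕ} (M : Matrix (Fin N) (Fin m) ℝ) (k s : ℕ) : ℝ :=
  ⨆ a, Real.sqrt (∑ j : Fin m,
    if k ≤ (j : ℕ) + 1 ∧ (j : ℕ) + 1 ≤ s then (M a j) ^ 2 else 0)

/-- `η = (11 b²/(b−1)²) √(2 (log 9) r + (K+7) log(N+n))`. -/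
def eta (N n r : ℕ) (K b : ℝ) : ℝ :=
  11 * b ^ 2 / (b - 1) ^ 2 *
    Real.sqrt (2 * Real.log 9 * r + (K + 7) * Real.log ((N : ℝ) + n))

/-- `χ(b) = 1 + 1/(4b(b−1))`. -/
def chi (b : ℝ) : ℝ := 1 + 1 / (4 * b * (b - 1))

/-- `ξ(b) = 1 + 1/(2(b−1)²)`. -/
def xib (b : ℝ) : ℝ := 1 + 1 / (2 * (b - 1) ^ 2)

/-- `γ = (9 b²/(b−1)²) √(r (K+7) log(N+n))`. -/
def gam (N n r : ℕ) (K b : ℝ) : ℝ :=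
  9 * b ^ 2 / (b - 1) ^ 2 *
    Real.sqrt ((r : ℝ) * (K + 7) * Real.log ((N : ℝ) + n))

/-- `min {δ_{k-1}, δ_s}` where `δ_j = σ_j − σ_{j+1}` (1-indexed) and `δ_0 = ∞`
(so for `k = 1` the minimum is just `δ_s`). -/
def dmin (σ : ℕ → ℝ) (k s : ℕ) : ℝ :=
  if k = 1 then σ s - σ (s + 1) else min (σ (k - 1) - σ k) (σ s - σ (s + 1))

/-- The symmetric dilation `ℰ = [[0, E], [Eᵀ, 0]]` of a rectangular matrix `E`. -/
def dil {N n : ℕ} (E : Matrix (Fin N) (Fin n) ℝ) :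
    Matrix (Fin N ⊕ Fin n) (Fin N ⊕ Fin n) ℝ :=
  Matrix.fromBlocks 0 E Eᵀ 0

/-- Complex resolvent `G(z) = (z I − ℰ)⁻¹` of the dilation. -/
def resolvC {N n : ℕ} (z : ℂ) (E : Matrix (Fin N) (Fin n) ℝ) :
    Matrix (Fin N ⊕ Fin n) (Fin N ⊕ Fin n) ℂ :=
  (z • (1 : Matrix (Fin N ⊕ Fin n) (Fin N ⊕ Fin n) ℂ) -
      (dil E).map (Complex.ofReal))⁻¹

/-- `φ₁(z) = z − ∑_{t=N+1}^{N+n} G(z)_{tt}` (complex version). -/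
def phi1C {N n : ℕ} (z : ℂ) (E : Matrix (Fin N) (Fin n) ℝ) : ℂ :=
  z - ∑ t : Fin n, resolvC z E (Sum.inr t) (Sum.inr t)

/-- `φ₂(z) = z − ∑_{t=1}^{N} G(z)_{tt}` (complex version). -/
def phi2C {N n : ℕ} (z : ℂ) (E : Matrix (Fin N) (Fin n) ℝ) : ℂ :=
  z - ∑ t : Fin N, resolvC z E (Sum.inl t) (Sum.inl t)

/-- Real resolvent `G(z) = (z I − ℰ)⁻¹` of the dilation, for real `z`. -/
def resolvR {N n : ℕ} (z : ℝ) (E : Matrix (Fin N) (Fin n) ℝ) :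
    Matrix (Fin N ⊕ Fin n) (Fin N ⊕ Fin n) ℝ :=
  (z • (1 : Matrix (Fin N ⊕ Fin n) (Fin N ⊕ Fin n) ℝ) - dil E)⁻¹

/-- `φ₁(z)` for real `z` (equals the complex version at a real point). -/
def phi1R {N n : ℕ} (z : ℝ) (E : Matrix (Fin N) (Fin n) ℝ) : ℝ :=
  z - ∑ t : Fin n, resolvR z E (Sum.inr t) (Sum.inr t)

/-- `φ₂(z)` for real `z` (equals the complex version at a real point). -/
def phi2R {N n : ℕ} (z : ℝ) (E : Matrix (Fin N) (Fin n) ℝ) : ℝ :=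
  z - ∑ t : Fin N, resolvR z E (Sum.inl t) (Sum.inl t)

/-- `Φ(z)`: diagonal matrix whose first `N` diagonal entries are `1/φ₁(z)` and whose
last `n` diagonal entries are `1/φ₂(z)`. -/
def PhiC {N n : ℕ} (z : ℂ) (E : Matrix (Fin N) (Fin n) ℝ) :
    Matrix (Fin N ⊕ Fin n) (Fin N ⊕ Fin n) ℂ :=
  Matrix.of fun p q =>
    if p = q then Sum.elim (fun _ => (phi1C z E)⁻¹) (fun _ => (phi2C z E)⁻¹) p else 0

/-- The `(N+n) × 2r` matrix `𝒰` of eigenvectors of the dilation of `A = U D Vᵀ`. -/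
def calU {N n r : ℕ} (U : Matrix (Fin N) (Fin r) ℝ) (V : Matrix (Fin n) (Fin r) ℝ) :
    Matrix (Fin N ⊕ Fin n) (Fin r ⊕ Fin r) ℝ :=
  Matrix.fromBlocks ((Real.sqrt 2)⁻¹ • U) ((Real.sqrt 2)⁻¹ • U)
    ((Real.sqrt 2)⁻¹ • V) (-((Real.sqrt 2)⁻¹ • V))

theorem Matrix.isHermitian_transpose_mul_self {α : Type*} {m n : Type*} [Fintype m]
    [CommRing α] [StarRing α] [TrivialStar α] (A : Matrix m n α) : (Aᵀ * A).IsHermitian := by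
  simpa [Matrix.conjTranspose_eq_transpose_of_trivial] using
    Matrix.isHermitian_conjTranspose_mul_self A

/-- Schatten `p`-norm: `(∑ᵢ sᵢ(M)ᵖ)^{1/p}`, where the singular values `sᵢ(M)` are the
square roots of the eigenvalues of `Mᴴ M`. -/
def schatten (p : ℝ) {m r : ℕ} (M : Matrix (Fin m) (Fin r) ℝ) : ℝ :=
  (∑ i, Real.sqrt ((Matrix.isHermitian_transpose_mul_self M).eigenvalues i) ^ p) ^ (1 / p)

/-!
Courant–Fischer argument. Take a unit vector `x` in the span of the top `k` right singular
vectors of `A + E` that is orthogonal to the top `k - 1` right singular vectors of `A`. Then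
`‖(A + E) x‖ ≥ σ̃ₖ`, while `A x = U g` with `‖g‖ ≤ σₖ`, so
`σ̃ₖ² ≤ ‖g‖² + 2 ⟪U g, E x⟫ + ‖E‖²`. Splitting `x = V Vᵀ x + w`, the cross term is at most
`σₖ (‖Uᵀ E V‖ + ‖E‖ ‖w‖)`. Since `x = (A + E)ᵀ z` with `‖z‖ ≤ 1 / σ̃ₖ` and `(I - V Vᵀ) Aᵀ = 0`,
the residual satisfies `‖w‖ ≤ ‖E‖ / σ̃ₖ`. Solving the quadratic inequality gives
`σ̃ₖ ≤ σₖ + ‖Uᵀ E V‖ + 2 ‖E‖² / σ̃ₖ`, which is stronger than the claim.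
-/

section VectorNorm

variable {ι : Type*} [Fintype ι]

lemma vnorm_eq_norm_toLp (x : ι → ℝ) : vnorm x = ‖WithLp.toLp 2 x‖ := by
  simp [vnorm, EuclideanSpace.norm_eq, Real.norm_eq_abs, sq_abs]

lemma vnorm_nonneg (x : ι → ℝ) : 0 ≤ vnorm x := Real.sqrt_nonneg _

lemma vnorm_sq (x : ι → ℝ) : vnorm x ^ 2 = x ⬝ᵥ x := by
  rw [vnorm, Real.sq_sqrt (by positivity)]
  simp [dotProduct, sq]

lemma vnorm_smul (a : ℝ) (x : ι → ℝ) : vnorm (a • x) = |a| * vnorm x := by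
  simp only [vnorm_eq_norm_toLp, WithLp.toLp_smul, norm_smul, Real.norm_eq_abs]

lemma abs_dotProduct_le_vnorm_mul (x y : ι → ℝ) : |x ⬝ᵥ y| ≤ vnorm x * vnorm y := by
  have h := abs_real_inner_le_norm (WithLp.toLp 2 x : EuclideanSpace ℝ ι) (WithLp.toLp 2 y)
  rwa [EuclideanSpace.inner_eq_star_dotProduct, ← vnorm_eq_norm_toLp, ← vnorm_eq_norm_toLp,
    star_trivial, dotProduct_comm] at h

lemma vnorm_le_vnorm_of_abs_le {x y : ι → ℝ} (h : ∀ i, |x i| ≤ |y i|) : vnorm x ≤ vnorm y :=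
  Real.sqrt_le_sqrt <| Finset.sum_le_sum fun i _ => sq_le_sq.mpr (h i)

end VectorNorm

section OperatorNorm

variable {ι κ : Type*} [Fintype ι] [Fintype κ] [DecidableEq κ]

lemma opNorm_nonneg (M : Matrix ι κ ℝ) : 0 ≤ opNorm M := norm_nonneg _

lemma vnorm_mulVec_le (M : Matrix ι κ ℝ) (x : κ → ℝ) :
    vnorm (M *ᵥ x) ≤ opNorm M * vnorm x := by
  simpa [opNorm, vnorm_eq_norm_toLp] using
    (LinearMap.toContinuousLinearMap (Matrix.toEuclideanLin M)).le_opNorm (WithLp.toLp 2 x)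

open scoped Matrix.Norms.L2Operator in
lemma opNorm_transpose [DecidableEq ι] (M : Matrix ι κ ℝ) : opNorm Mᵀ = opNorm M := by
  rw [← conjTranspose_eq_transpose_of_trivial]
  exact Matrix.l2_opNorm_conjTranspose M

end OperatorNorm

lemma card_le_of_orthonormal {a b : ℕ} {W : Matrix (Fin a) (Fin b) ℝ} (hW : Wᵀ * W = 1) :
    b ≤ a := by
  have h := (Wᵀ.rank_mul_le_right W).trans W.rank_le_height
  rwa [hW, rank_one, Fintype.card_fin] at h

section Orthonormal

variable {ι κ : Type*} [Fintype ι] [Fintype κ] [DecidableEq κ] {W : Matrix ι κ ℝ}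

lemma vnorm_mulVec_of_orthonormal (hW : Wᵀ * W = 1) (y : κ → ℝ) :
    vnorm (W *ᵥ y) = vnorm y := by
  rw [← sq_eq_sq₀ (vnorm_nonneg _) (vnorm_nonneg _), vnorm_sq, vnorm_sq, dotProduct_mulVec,
    ← mulVec_transpose, mulVec_mulVec, hW, one_mulVec]

variable [DecidableEq ι]

lemma one_sub_mul_transpose_mul_of_orthonormal (hW : Wᵀ * W = 1) : (1 - W * Wᵀ) * W = 0 := by
  rw [Matrix.sub_mul, Matrix.one_mul, Matrix.mul_assoc, hW, Matrix.mul_one, sub_self]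

lemma vnorm_transpose_mulVec_sq_add (hW : Wᵀ * W = 1) (x : ι → ℝ) :
    vnorm (Wᵀ *ᵥ x) ^ 2 + vnorm ((1 - W * Wᵀ) *ᵥ x) ^ 2 = vnorm x ^ 2 := by
  have hcross : x ⬝ᵥ (W *ᵥ (Wᵀ *ᵥ x)) = (Wᵀ *ᵥ x) ⬝ᵥ (Wᵀ *ᵥ x) := by
    rw [dotProduct_mulVec, ← mulVec_transpose]
  have hsq := vnorm_mulVec_of_orthonormal hW (Wᵀ *ᵥ x)
  rw [← sq_eq_sq₀ (vnorm_nonneg _) (vnorm_nonneg _), vnorm_sq, vnorm_sq] at hsq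
  rw [vnorm_sq, vnorm_sq, vnorm_sq, sub_mulVec, one_mulVec, ← mulVec_mulVec, sub_dotProduct,
    dotProduct_sub, dotProduct_sub, hsq, hcross, dotProduct_comm (W *ᵥ _) x, hcross]
  ring

lemma vnorm_transpose_mulVec_le (hW : Wᵀ * W = 1) (x : ι → ℝ) :
    vnorm (Wᵀ *ᵥ x) ≤ vnorm x := by
  have := vnorm_transpose_mulVec_sq_add hW x
  nlinarith [vnorm_nonneg x, vnorm_nonneg (Wᵀ *ᵥ x), sq_nonneg (vnorm ((1 - W * Wᵀ) *ᵥ x))]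

lemma vnorm_complement_proj_mulVec_le (hW : Wᵀ * W = 1) (x : ι → ℝ) :
    vnorm ((1 - W * Wᵀ) *ᵥ x) ≤ vnorm x := by
  have := vnorm_transpose_mulVec_sq_add hW x
  nlinarith [vnorm_nonneg x, vnorm_nonneg ((1 - W * Wᵀ) *ᵥ x), sq_nonneg (vnorm (Wᵀ *ᵥ x))]

end Orthonormal

lemma exists_vnorm_eq_one_mulVec_eq_zero {p q : ℕ} (M : Matrix (Fin q) (Fin p) ℝ) {s : ℕ}
    (hs : s < p) :
    ∃ c : Fin p → ℝ, vnorm c = 1 ∧ ∀ j : Fin q, (j : ℕ) < s → (M *ᵥ c) j = 0 := by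
  let f : (Fin p → ℝ) →ₗ[ℝ] ({j : Fin q // (j : ℕ) < s} → ℝ) :=
    LinearMap.funLeft ℝ ℝ Subtype.val ∘ₗ M.mulVecLin
  have hcard : Fintype.card {j : Fin q // (j : ℕ) < s} ≤ s :=
    (Fintype.card_le_of_injective (fun j : {j : Fin q // (j : ℕ) < s} => (⟨j, j.2⟩ : Fin s))
      fun _ _ h => Subtype.ext (Fin.ext (Fin.mk.inj_iff.mp h))).trans (Fintype.card_fin s).le
  obtain ⟨c, hc, hc0⟩ := Submodule.exists_mem_ne_zero_of_ne_bot
    (LinearMap.ker_ne_bot_of_finrank_lt (f := f) (by simpa using hcard.trans_lt hs))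
  have hpos : 0 < vnorm c := by
    rw [vnorm_eq_norm_toLp, norm_pos_iff]
    exact fun h => hc0 (congrArg WithLp.ofLp h)
  refine ⟨(vnorm c)⁻¹ • c, ?_, fun j hj => ?_⟩
  · rw [vnorm_smul, abs_of_pos (inv_pos.mpr hpos), inv_mul_cancel₀ hpos.ne']
  · have := congrFun (LinearMap.mem_ker.mp hc) ⟨j, hj⟩
    simp only [f, LinearMap.comp_apply, LinearMap.funLeft_apply, mulVecLin_apply] at this
    simp [mulVec_smul, this]

section SingularValueDecomposition

variable {a b c k : ℕ}

lemma sdiag_mulVec (σ : ℕ → ℝ) (g : Fin c → ℝ) :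
    sdiag σ *ᵥ g = fun i : Fin c => σ ((i : ℕ) + 1) * g i := by
  ext i
  simp [sdiag, mulVec, dotProduct]

lemma sdiag_transpose (σ : ℕ → ℝ) : (sdiag (m := c) σ)ᵀ = sdiag σ := by
  ext i j
  by_cases h : i = j
  · subst h; rfl
  · simp [sdiag, h, Ne.symm h]

lemma transpose_svd (W : Matrix (Fin a) (Fin c) ℝ) (X : Matrix (Fin b) (Fin c) ℝ)
    (σ : ℕ → ℝ) : (W * sdiag (m := c) σ * Xᵀ)ᵀ = X * sdiag (m := c) σ * Wᵀ := by
  rw [transpose_mul, transpose_mul, transpose_transpose, sdiag_transpose, Matrix.mul_assoc]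

lemma transpose_mul_submatrix_castLE_of_orthonormal {W : Matrix (Fin a) (Fin c) ℝ}
    (hW : Wᵀ * W = 1) (hk : k ≤ c) :
    (W.submatrix id (Fin.castLE hk))ᵀ * W.submatrix id (Fin.castLE hk) = 1 := by
  have h := congrArg (fun M => M.submatrix (Fin.castLE hk) (Fin.castLE hk)) hW
  rwa [submatrix_mul _ _ _ _ _ Function.bijective_id,
    submatrix_one _ (Fin.castLE_injective hk)] at h

lemma svd_mul_submatrix_castLE (W : Matrix (Fin a) (Fin c) ℝ) {X : Matrix (Fin b) (Fin c) ℝ}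
    (hX : Xᵀ * X = 1) (σ : ℕ → ℝ) (hk : k ≤ c) :
    W * sdiag (m := c) σ * Xᵀ * X.submatrix id (Fin.castLE hk) =
      W.submatrix id (Fin.castLE hk) * sdiag (m := k) σ := by
  have hX' : Xᵀ * X.submatrix id (Fin.castLE hk) =
      (1 : Matrix (Fin c) (Fin c) ℝ).submatrix id (Fin.castLE hk) := by
    rw [← hX]; rfl
  rw [Matrix.mul_assoc, hX']
  ext i j
  simp [mul_apply, sdiag, one_apply]

variable {W : Matrix (Fin a) (Fin c) ℝ} {X : Matrix (Fin b) (Fin c) ℝ} {σ : ℕ → ℝ}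

lemma mul_le_vnorm_svd_mulVec_submatrix_castLE (hW : Wᵀ * W = 1) (hX : Xᵀ * X = 1)
    (hσ : AntitoneOn σ (Set.Ici 1)) (hσk : 0 ≤ σ k) (hk : k ≤ c) (v : Fin k → ℝ) :
    σ k * vnorm v ≤
      vnorm ((W * sdiag (m := c) σ * Xᵀ) *ᵥ (X.submatrix id (Fin.castLE hk) *ᵥ v)) := by
  rw [mulVec_mulVec, svd_mul_submatrix_castLE W hX σ hk, ← mulVec_mulVec,
    vnorm_mulVec_of_orthonormal (transpose_mul_submatrix_castLE_of_orthonormal hW hk),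
    sdiag_mulVec, ← abs_of_nonneg hσk, ← vnorm_smul]
  refine vnorm_le_vnorm_of_abs_le fun i => ?_
  rw [Pi.smul_apply, smul_eq_mul, abs_mul, abs_mul]
  have hσi : σ k ≤ σ ((i : ℕ) + 1) :=
    hσ (Set.mem_Ici.mpr (by omega)) (Set.mem_Ici.mpr i.pos) i.isLt
  refine mul_le_mul_of_nonneg_right ?_ (abs_nonneg _)
  rwa [abs_of_nonneg hσk, abs_of_nonneg (hσk.trans hσi)]

lemma exists_transpose_svd_mulVec_eq_submatrix_castLE_mulVec (hW : Wᵀ * W = 1)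
    (hσ : AntitoneOn σ (Set.Ici 1)) (hσk : 0 < σ k) (hk : k ≤ c) (v : Fin k → ℝ) :
    ∃ z, (W * sdiag (m := c) σ * Xᵀ)ᵀ *ᵥ z = X.submatrix id (Fin.castLE hk) *ᵥ v ∧
      vnorm z ≤ vnorm v / σ k := by
  have hσi (i : Fin k) : σ k ≤ σ ((i : ℕ) + 1) :=
    hσ (Set.mem_Ici.mpr (by omega)) (Set.mem_Ici.mpr i.pos) i.isLt
  refine ⟨W.submatrix id (Fin.castLE hk) *ᵥ fun i => v i / σ ((i : ℕ) + 1), ?_, ?_⟩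
  · rw [transpose_svd, mulVec_mulVec, svd_mul_submatrix_castLE X hW σ hk, ← mulVec_mulVec,
      sdiag_mulVec]
    congr 1
    ext i
    field_simp [(hσk.trans_le (hσi i)).ne']
  · rw [vnorm_mulVec_of_orthonormal (transpose_mul_submatrix_castLE_of_orthonormal hW hk),
      div_eq_inv_mul, ← abs_of_pos (inv_pos.mpr hσk), ← vnorm_smul]
    refine vnorm_le_vnorm_of_abs_le fun i => ?_
    rw [Pi.smul_apply, smul_eq_mul, abs_mul, div_eq_inv_mul, abs_mul]
    refine mul_le_mul_of_nonneg_right ?_ (abs_nonneg _)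
    rw [abs_of_pos (inv_pos.mpr hσk), abs_of_pos (inv_pos.mpr (hσk.trans_le (hσi i)))]
    exact inv_anti₀ hσk (hσi i)

lemma vnorm_sdiag_mulVec_le {r : ℕ} (hσ : AntitoneOn σ (Set.Ici 1)) (hk : 1 ≤ k)
    (hkr : k ≤ r) (hσr : 0 ≤ σ r) {p : Fin r → ℝ}
    (hp : ∀ j : Fin r, (j : ℕ) + 1 < k → p j = 0) :
    vnorm (sdiag σ *ᵥ p) ≤ σ k * vnorm p := by
  have hσk : σ r ≤ σ k := hσ (Set.mem_Ici.mpr hk) (Set.mem_Ici.mpr (hk.trans hkr)) hkr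
  rw [sdiag_mulVec, ← abs_of_nonneg (hσr.trans hσk), ← vnorm_smul]
  refine vnorm_le_vnorm_of_abs_le fun j => ?_
  rw [Pi.smul_apply, smul_eq_mul, abs_mul, abs_mul]
  rcases lt_or_ge ((j : ℕ) + 1) k with hj | hj
  · simp [hp j hj]
  · have hσj : σ r ≤ σ ((j : ℕ) + 1) :=
      hσ (Set.mem_Ici.mpr (by omega)) (Set.mem_Ici.mpr (hk.trans hkr)) j.isLt
    refine mul_le_mul_of_nonneg_right ?_ (abs_nonneg _)
    rw [abs_of_nonneg (hσr.trans hσj), abs_of_nonneg (hσr.trans hσk)]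
    exact hσ (Set.mem_Ici.mpr hk) (Set.mem_Ici.mpr (by omega)) hj

end SingularValueDecomposition

section Perturbation

variable {ι κ ρ : Type*} [Fintype ι] [Fintype κ] [Fintype ρ] [DecidableEq κ] [DecidableEq ρ]
  {U : Matrix ι ρ ℝ} {V : Matrix κ ρ ℝ}

lemma vnorm_complement_proj_mulVec_le_of_transpose_mulVec_eq [DecidableEq ι]
    (hV : Vᵀ * V = 1) (D : Matrix ρ ρ ℝ) (E : Matrix ι κ ℝ) {x : κ → ℝ} {z : ι → ℝ}
    (hz : (U * D * Vᵀ + E)ᵀ *ᵥ z = x) :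
    vnorm ((1 - V * Vᵀ) *ᵥ x) ≤ opNorm E * vnorm z := by
  have hA : (1 - V * Vᵀ) * (U * D * Vᵀ)ᵀ = 0 := by
    rw [transpose_mul, transpose_transpose, ← Matrix.mul_assoc,
      one_sub_mul_transpose_mul_of_orthonormal hV, Matrix.zero_mul]
  have hx : (1 - V * Vᵀ) *ᵥ x = (1 - V * Vᵀ) *ᵥ (Eᵀ *ᵥ z) := by
    rw [← hz, transpose_add, add_mulVec, mulVec_add, mulVec_mulVec, hA, zero_mulVec, zero_add]
  rw [hx, ← opNorm_transpose E]
  exact (vnorm_complement_proj_mulVec_le hV _).trans (vnorm_mulVec_le _ _)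

lemma abs_dotProduct_mulVec_le_of_orthonormal (hU : Uᵀ * U = 1) (hV : Vᵀ * V = 1)
    (E : Matrix ι κ ℝ) (g : ρ → ℝ) (x : κ → ℝ) :
    |(U *ᵥ g) ⬝ᵥ (E *ᵥ x)| ≤
      vnorm g * (opNorm (Uᵀ * E * V) * vnorm x + opNorm E * vnorm ((1 - V * Vᵀ) *ᵥ x)) := by
  have hx : x = V *ᵥ (Vᵀ *ᵥ x) + (1 - V * Vᵀ) *ᵥ x := by
    rw [sub_mulVec, one_mulVec, mulVec_mulVec]; abel
  have hpar : (U *ᵥ g) ⬝ᵥ (E *ᵥ (V *ᵥ (Vᵀ *ᵥ x))) = g ⬝ᵥ ((Uᵀ * E * V) *ᵥ (Vᵀ *ᵥ x)) := by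
    rw [dotProduct_comm, dotProduct_mulVec, ← mulVec_transpose, mulVec_mulVec, mulVec_mulVec,
      dotProduct_comm]
  have h₁ : |g ⬝ᵥ ((Uᵀ * E * V) *ᵥ (Vᵀ *ᵥ x))| ≤ vnorm g * (opNorm (Uᵀ * E * V) * vnorm x) :=
    (abs_dotProduct_le_vnorm_mul _ _).trans <| mul_le_mul_of_nonneg_left
      ((vnorm_mulVec_le _ _).trans (mul_le_mul_of_nonneg_left (vnorm_transpose_mulVec_le hV x)
        (opNorm_nonneg _))) (vnorm_nonneg g)
  have h₂ : |(U *ᵥ g) ⬝ᵥ (E *ᵥ ((1 - V * Vᵀ) *ᵥ x))| ≤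
      vnorm g * (opNorm E * vnorm ((1 - V * Vᵀ) *ᵥ x)) := by
    refine (abs_dotProduct_le_vnorm_mul _ _).trans ?_
    rw [vnorm_mulVec_of_orthonormal hU]
    exact mul_le_mul_of_nonneg_left (vnorm_mulVec_le _ _) (vnorm_nonneg g)
  conv_lhs => rw [hx, mulVec_add, dotProduct_add, hpar]
  rw [mul_add]
  exact (abs_add_le _ _).trans (add_le_add h₁ h₂)

lemma vnorm_svd_add_mulVec_sq_le (hU : Uᵀ * U = 1) (hV : Vᵀ * V = 1) (D : Matrix ρ ρ ℝ)
    (E : Matrix ι κ ℝ) (x : κ → ℝ) :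
    vnorm ((U * D * Vᵀ + E) *ᵥ x) ^ 2 ≤ vnorm (D *ᵥ (Vᵀ *ᵥ x)) ^ 2 +
      2 * vnorm (D *ᵥ (Vᵀ *ᵥ x)) *
        (opNorm (Uᵀ * E * V) * vnorm x + opNorm E * vnorm ((1 - V * Vᵀ) *ᵥ x)) +
      (opNorm E * vnorm x) ^ 2 := by
  set g := D *ᵥ (Vᵀ *ᵥ x)
  have hsplit : (U * D * Vᵀ + E) *ᵥ x = U *ᵥ g + E *ᵥ x := by
    rw [add_mulVec, ← mulVec_mulVec, ← mulVec_mulVec]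
  have hcross := (le_abs_self _).trans (abs_dotProduct_mulVec_le_of_orthonormal hU hV E g x)
  have hE : vnorm (E *ᵥ x) ^ 2 ≤ (opNorm E * vnorm x) ^ 2 :=
    pow_le_pow_left₀ (vnorm_nonneg _) (vnorm_mulVec_le E x) 2
  rw [hsplit, vnorm_sq, add_dotProduct, dotProduct_add, dotProduct_add, ← vnorm_sq, ← vnorm_sq,
    vnorm_mulVec_of_orthonormal hU, dotProduct_comm (E *ᵥ x)]
  linarith

end Perturbation

lemma vnorm_complement_proj_mulVec_submatrix_castLE_le {N n r m k : ℕ}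
    {U : Matrix (Fin N) (Fin r) ℝ} {V : Matrix (Fin n) (Fin r) ℝ} {D : Matrix (Fin r) (Fin r) ℝ}
    {E : Matrix (Fin N) (Fin n) ℝ} {Ut : Matrix (Fin N) (Fin m) ℝ}
    {Vt : Matrix (Fin n) (Fin m) ℝ} {σt : ℕ → ℝ} (hV : Vᵀ * V = 1) (hUt : Utᵀ * Ut = 1)
    (hσt : AntitoneOn σt (Set.Ici 1)) (hσk : 0 < σt k) (hk : k ≤ m)
    (h : U * D * Vᵀ + E = Ut * sdiag (m := m) σt * Vtᵀ) (v : Fin k → ℝ) :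
    vnorm ((1 - V * Vᵀ) *ᵥ (Vt.submatrix id (Fin.castLE hk) *ᵥ v)) ≤
      opNorm E * vnorm v / σt k := by
  obtain ⟨z, hz, hzv⟩ :=
    exists_transpose_svd_mulVec_eq_submatrix_castLE_mulVec (X := Vt) hUt hσt hσk hk v
  rw [← h] at hz
  calc _ ≤ opNorm E * vnorm z := vnorm_complement_proj_mulVec_le_of_transpose_mulVec_eq hV D E hz
    _ ≤ opNorm E * (vnorm v / σt k) := mul_le_mul_of_nonneg_left hzv (opNorm_nonneg E)
    _ = opNorm E * vnorm v / σt k := (mul_div_assoc ..).symm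

lemma le_add_two_mul_sq_div_add_of_sq_le {s t g c e w : ℝ} (hs : 0 < s) (hg : 0 ≤ g)
    (hgt : g ≤ t) (hc : 0 ≤ c) (he : 0 ≤ e) (hw : w ≤ e / s)
    (h : s ^ 2 ≤ g ^ 2 + 2 * g * (c + e * w) + e ^ 2) :
    s ≤ t + 2 * e ^ 2 / s + c := by
  rcases le_or_gt s g with hsg | hgs
  · have : 0 ≤ 2 * e ^ 2 / s := by positivity
    linarith
  obtain ⟨q, he2⟩ : ∃ q, e ^ 2 = s * q := ⟨e ^ 2 / s, by field_simp⟩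
  have hq : 0 ≤ q := nonneg_of_mul_nonneg_right (he2 ▸ sq_nonneg e) hs
  have hew : e * w ≤ q := by
    calc e * w ≤ e * (e / s) := mul_le_mul_of_nonneg_left hw he
      _ = q := by rw [← mul_div_assoc, ← sq, he2, mul_div_cancel_left₀ q hs.ne']
  -- `2 g ≤ s + g` and `s ≤ s + g` let `s + g` be cancelled from `s² - g²`.
  have key : (s + g) * (s - g) ≤ (s + g) * (c + 2 * q) := by
    nlinarith [mul_le_mul_of_nonneg_left hew hg, mul_nonneg hq hg,
      mul_nonneg (add_nonneg hc hq) (sub_nonneg.mpr hgs.le)]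
  have := le_of_mul_le_mul_left key (by linarith)
  rw [he2, mul_div_assoc, mul_div_cancel_left₀ q hs.ne']
  linarith

theorem stmt8_singular_value_upper_bound_general
    (N n r : ℕ)
    (A E : Matrix (Fin N) (Fin n) ℝ)
    (U : Matrix (Fin N) (Fin r) ℝ) (V : Matrix (Fin n) (Fin r) ℝ) (σ : ℕ → ℝ)
    (hU : Uᵀ * U = 1) (hV : Vᵀ * V = 1) (hA : A = U * sdiag (m := r) σ * Vᵀ)
    (hσpos : ∀ j, 1 ≤ j → j ≤ r → 0 < σ j)
    (hσdec : ∀ j, 1 ≤ j → σ (j + 1) ≤ σ j)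
    (m : ℕ) (hm : m = min N n)
    (Ut : Matrix (Fin N) (Fin m) ℝ) (Vt : Matrix (Fin n) (Fin m) ℝ) (σt : ℕ → ℝ)
    (hUt : Utᵀ * Ut = 1) (hVt : Vtᵀ * Vt = 1)
    (hAt : A + E = Ut * sdiag (m := m) σt * Vtᵀ)
    (hσtdec : ∀ j, 1 ≤ j → σt (j + 1) ≤ σt j)
    (k : ℕ) (hk1 : 1 ≤ k) (hkr : k ≤ r) (hpos : 0 < σt k) :
    σt k ≤ σ k + 2 * Real.sqrt k * opNorm E ^ 2 / σt k +
        k * opNorm E ^ 3 / σt k ^ 2 + opNorm (Uᵀ * E * V) := by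
  have hkm : k ≤ m := hm ▸ le_min (hkr.trans (card_le_of_orthonormal hU))
    (hkr.trans (card_le_of_orthonormal hV))
  have hσ : AntitoneOn σ (Set.Ici 1) := antitoneOn_nat_Ici_of_succ_le hσdec
  have hσt : AntitoneOn σt (Set.Ici 1) := antitoneOn_nat_Ici_of_succ_le hσtdec
  -- `x` lies in the span of the top `k` right singular vectors of `A + E` and is orthogonal
  -- to the top `k - 1` right singular vectors of `A`.
  obtain ⟨c, hc, hcperp⟩ := exists_vnorm_eq_one_mulVec_eq_zero
    (Vᵀ * Vt.submatrix id (Fin.castLE hkm)) (Nat.sub_lt hk1 one_pos)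
  set x := Vt.submatrix id (Fin.castLE hkm) *ᵥ c
  have hx : vnorm x = 1 := by
    rw [vnorm_mulVec_of_orthonormal (transpose_mul_submatrix_castLE_of_orthonormal hVt hkm), hc]
  have hlow : σt k ≤ vnorm ((A + E) *ᵥ x) := by
    have := mul_le_vnorm_svd_mulVec_submatrix_castLE hUt hVt hσt hpos.le hkm c
    rwa [hc, mul_one, ← hAt] at this
  have hw : vnorm ((1 - V * Vᵀ) *ᵥ x) ≤ opNorm E / σt k := by
    have := vnorm_complement_proj_mulVec_submatrix_castLE_le hV hUt hσt hpos hkm (hA ▸ hAt) c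
    rwa [hc, mul_one] at this
  have hg : vnorm (sdiag σ *ᵥ (Vᵀ *ᵥ x)) ≤ σ k := by
    have hperp (j : Fin r) (hj : (j : ℕ) + 1 < k) : (Vᵀ *ᵥ x) j = 0 := by
      rw [mulVec_mulVec]; exact hcperp j (by omega)
    have := vnorm_sdiag_mulVec_le hσ hk1 hkr (hσpos r (hk1.trans hkr) le_rfl).le hperp
    rw [← mul_one (σ k), ← hx]
    exact this.trans (mul_le_mul_of_nonneg_left (vnorm_transpose_mulVec_le hV x)
      (hσpos k hk1 hkr).le)
  have hsq := vnorm_svd_add_mulVec_sq_le hU hV (sdiag σ) E x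
  rw [← hA, hx, mul_one, mul_one] at hsq
  have hsqrt : 2 * opNorm E ^ 2 / σt k ≤ 2 * Real.sqrt k * opNorm E ^ 2 / σt k := by
    gcongr
    exact le_mul_of_one_le_right zero_le_two (Real.one_le_sqrt.mpr (by exact_mod_cast hk1))
  have hcube : 0 ≤ k * opNorm E ^ 3 / σt k ^ 2 := by have := opNorm_nonneg E; positivity
  have := le_add_two_mul_sq_div_add_of_sq_le hpos (vnorm_nonneg _) hg (opNorm_nonneg _)
    (opNorm_nonneg E) hw ((pow_le_pow_left₀ hpos.le hlow 2).trans hsq)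
  linarith

/-- Theorem 7 of the paper, upper bound, deterministic form. -/
theorem stmt8_singular_value_upper_bound
    (N n r : ℕ) (hN : 0 < N) (hn : 0 < n) (hr : 0 < r)
    (A E : Matrix (Fin N) (Fin n) ℝ)
    (U : Matrix (Fin N) (Fin r) ℝ) (V : Matrix (Fin n) (Fin r) ℝ) (σ : ℕ → ℝ)
    (hU : Uᵀ * U = 1) (hV : Vᵀ * V = 1) (hA : A = U * sdiag (m := r) σ * Vᵀ)
    (hσpos : ∀ j, 1 ≤ j → j ≤ r → 0 < σ j)
    (hσdec : ∀ j, 1 ≤ j → σ (j + 1) ≤ σ j)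
    (hσzero : ∀ j, r < j → σ j = 0)
    (m : ℕ) (hm : m = min N n)
    (Ut : Matrix (Fin N) (Fin m) ℝ) (Vt : Matrix (Fin n) (Fin m) ℝ) (σt : ℕ → ℝ)
    (hUt : Utᵀ * Ut = 1) (hVt : Vtᵀ * Vt = 1)
    (hAt : A + E = Ut * sdiag (m := m) σt * Vtᵀ)
    (hσtdec : ∀ j, 1 ≤ j → σt (j + 1) ≤ σt j)
    (hσtnn : ∀ j, 1 ≤ j → 0 ≤ σt j)
    (k : ℕ) (hk1 : 1 ≤ k) (hkr : k ≤ r) (hpos : 0 < σt k) :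
    σt k ≤ σ k + 2 * Real.sqrt k * opNorm E ^ 2 / σt k +
        k * opNorm E ^ 3 / σt k ^ 2 + opNorm (Uᵀ * E * V) :=
  stmt8_singular_value_upper_bound_general N n r A E U V σ hU hV hA hσpos hσdec m hm Ut Vt σt hUt
    hVt hAt hσtdec k hk1 hkr hpos
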